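/- The space S_{3,nat}(0,…,l) of natural cubic splines with knots 0,…,l (cubic splines s with s''(0) = s''(l) = 0) is a real vector space of dimension l+1, and the evaluation map s ↦ (s(0),…,s(l)) is a linear isomorphism from S_{3,nat}(0,…,l) onto ℝ^{l+1}. -/

import Mathlib

/-- `g : ℝ → ℝ` restricts to a cubic spline with knots `0, …, l`: it is `C²` on `[0, l]`
and coincides on each `[i, i+1]` with a polynomial of degree at most `3`. -/
def IsCubicSpline (l : ℕ) (g : ℝ → ℝ) : Prop :=
  ContDiffOn ℝ 2 g (Set.Icc 0 (l : ℝ)) ∧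
    ∀ i < l, ∃ P : Polynomial ℝ, P.natDegree ≤ 3 ∧
      ∀ t ∈ Set.Icc (i : ℝ) ((i : ℝ) + 1), g t = P.eval t

/-- A natural cubic spline: a cubic spline whose second derivative vanishes at both
endpoints `0` and `l`. -/
def IsNatCubicSpline (l : ℕ) (g : ℝ → ℝ) : Prop :=
  IsCubicSpline l g ∧
    iteratedDerivWithin 2 g (Set.Icc 0 (l : ℝ)) 0 = 0 ∧
    iteratedDerivWithin 2 g (Set.Icc 0 (l : ℝ)) (l : ℝ) = 0

/-- The set of natural cubic splines with knots `0, …, l`, viewed as functions on `[0, l]`. -/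
def natSplineSet (l : ℕ) : Set (Set.Icc (0 : ℝ) (l : ℝ) → ℝ) :=
  {f | ∃ g : ℝ → ℝ, IsNatCubicSpline l g ∧ ∀ x : Set.Icc (0 : ℝ) (l : ℝ), f x = g x}

/-!
If a natural cubic spline `s` vanishes at the knots, then `∫₀ˡ (s'')² = 0`: on a piece,
`∫ (s'')² = [s'' s'] - ∫ s''' s'`, and the last integral vanishes because `s'''` is constant and `s`
is zero at both ends; the boundary terms telescope to `[s'' s']₀ˡ = 0`. No integral is needed: for a
cubic `Q` with `Q a = Q b = 0`, `[Q'' Q']ₐᵇ = (b - a)(A² + AB + B²)/3` where `A = Q'' a`,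
`B = Q'' b`. Hence `s''` vanishes at every knot, and each piece, a cubic vanishing together with its
second derivative at both ends, is zero: evaluation at the knots is injective. Conversely `1`, `x`
and the `l - 1` natural splines `(x - j)₊³ - (l - j)/l · x³`, `0 < j < l`, are linearly
independent (evaluate at `0, 1/2, 1`, then at the knots `2, …, l`, where the system is
unitriangular). So the dimension is `l + 1` and the evaluation map is an isomorphism.
-/

open Polynomial Set Filter Topology

theorem hasDerivAt_max_zero_pow (n : ℕ) (x : ℝ) :
    HasDerivAt (fun y : ℝ => max y 0 ^ (n + 2)) ((n + 2) * max x 0 ^ (n + 1)) x := by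
  have hpow (z : ℝ) : HasDerivAt (fun y : ℝ => y ^ (n + 2)) ((n + 2) * z ^ (n + 1)) z := by
    simpa using hasDerivAt_pow (n + 2) z
  rcases lt_trichotomy x 0 with hx | rfl | hx
  · have hzero : (fun y : ℝ => max y 0 ^ (n + 2)) =ᶠ[𝓝 x] fun _ => 0 := by
      filter_upwards [Iio_mem_nhds hx] with y hy
      simp [max_eq_right (mem_Iio.1 hy).le]
    simpa [max_eq_right hx.le] using (hasDerivAt_const x (0 : ℝ)).congr_of_eventuallyEq hzero
  · have hleft : HasDerivWithinAt (fun y : ℝ => max y 0 ^ (n + 2)) 0 (Iic 0) 0 :=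
      (hasDerivWithinAt_const 0 _ (0 : ℝ)).congr_of_mem
        (fun y hy => by simp [max_eq_right (mem_Iic.1 hy)]) (mem_Iic.2 le_rfl)
    have hright : HasDerivWithinAt (fun y : ℝ => max y 0 ^ (n + 2)) 0 (Ici 0) 0 :=
      ((hpow 0).hasDerivWithinAt.congr_of_mem
        (fun y hy => by simp [max_eq_left (mem_Ici.1 hy)]) (mem_Ici.2 le_rfl)).congr_deriv (by simp)
    have h := hleft.union hright
    rw [Iic_union_Ici, hasDerivWithinAt_univ] at h
    simpa using h
  · have hid : (fun y : ℝ => max y 0 ^ (n + 2)) =ᶠ[𝓝 x] fun y => y ^ (n + 2) := by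
      filter_upwards [Ioi_mem_nhds hx] with y hy
      simp [max_eq_left (mem_Ioi.1 hy).le]
    simpa [max_eq_left hx.le] using (hpow x).congr_of_eventuallyEq hid

theorem contDiff_max_zero_pow (n : ℕ) : ContDiff ℝ n (fun y : ℝ => max y 0 ^ (n + 1)) := by
  induction n with
  | zero => simpa using continuous_id.max continuous_const
  | succ n ih =>
    rw [Nat.cast_succ, contDiff_succ_iff_deriv]
    refine ⟨fun x => (hasDerivAt_max_zero_pow n x).differentiableAt, by simp, ?_⟩
    rw [funext fun x => (hasDerivAt_max_zero_pow n x).deriv]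
    exact contDiff_const.mul ih

theorem iteratedDeriv_two_eq_of_hasDerivAt {𝕜 F : Type*} [NontriviallyNormedField 𝕜]
    [NormedAddCommGroup F] [NormedSpace 𝕜 F] {f f' : 𝕜 → F} {f'' : F} {x : 𝕜}
    (hf : ∀ y, HasDerivAt f (f' y) y) (hf' : HasDerivAt f' f'' x) : iteratedDeriv 2 f x = f'' := by
  rw [iteratedDeriv_succ, iteratedDeriv_one, funext fun y => (hf y).deriv]
  exact hf'.deriv

theorem Polynomial.iteratedDeriv_eval {𝕜 : Type*} [NontriviallyNormedField 𝕜] (P : 𝕜[X])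
    (n : ℕ) : iteratedDeriv n (fun x => P.eval x) = fun x => (derivative^[n] P).eval x := by
  induction n with
  | zero => simp
  | succ n ih =>
    ext x
    rw [iteratedDeriv_succ, ih, Function.iterate_succ_apply', Polynomial.deriv]

theorem iteratedDerivWithin_eq_eval_of_eqOn {𝕜 : Type*} [NontriviallyNormedField 𝕜] {n : ℕ}
    {f : 𝕜 → 𝕜} {s t : Set 𝕜} (hts : t ⊆ s) (hs : UniqueDiffOn 𝕜 s) (ht : UniqueDiffOn 𝕜 t)
    (hf : ContDiffOn 𝕜 n f s) {P : 𝕜[X]} (hP : EqOn f (fun x => P.eval x) t) {x : 𝕜}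
    (hx : x ∈ t) : iteratedDerivWithin n f s x = (derivative^[n] P).eval x := by
  have hP_smooth : ContDiff 𝕜 n (fun x => P.eval x) := by simpa using P.contDiff_aeval (𝕜 := 𝕜) n
  rw [iteratedDerivWithin, ← iteratedFDerivWithin_subset hts ht hs hf hx, ← iteratedDerivWithin,
    iteratedDerivWithin_congr hP hx,
    iteratedDerivWithin_eq_iteratedDeriv ht hP_smooth.contDiffAt hx, P.iteratedDeriv_eval]

theorem Cubic.exists_toPoly_eq_of_natDegree_le {R : Type*} [Semiring R] {Q : R[X]}
    (hQ : Q.natDegree ≤ 3) : ∃ P : Cubic R, P.toPoly = Q :=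
  ⟨Cubic.equiv.symm ⟨Q, natDegree_le_iff_degree_le.mp hQ⟩,
    congrArg Subtype.val (Cubic.equiv.apply_symm_apply _)⟩

theorem cubic_energy_eq {Q : ℝ[X]} (hQ : Q.natDegree ≤ 3) {a b : ℝ} (ha : Q.eval a = 0)
    (hb : Q.eval b = 0) :
    Q.derivative.derivative.eval b * Q.derivative.eval b
        - Q.derivative.derivative.eval a * Q.derivative.eval a
      = (b - a) * (Q.derivative.derivative.eval a ^ 2
        + Q.derivative.derivative.eval a * Q.derivative.derivative.eval b
        + Q.derivative.derivative.eval b ^ 2) / 3 := by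
  obtain ⟨⟨c₃, c₂, c₁, c₀⟩, rfl⟩ := Cubic.exists_toPoly_eq_of_natDegree_le hQ
  simp only [Cubic.toPoly, eval_add, eval_mul, eval_C, eval_pow, eval_X, derivative_mul,
    derivative_C, zero_mul, derivative_X_pow_succ, Nat.cast_ofNat, map_add, map_one, zero_add,
    Nat.cast_one, pow_one, derivative_X, mul_one, add_zero, derivative_one, eval_one] at ha hb ⊢
  linear_combination 6 * c₃ * (hb - ha)

theorem cubic_eq_zero_of_eval_eq_zero {Q : ℝ[X]} (hQ : Q.natDegree ≤ 3) {a b : ℝ} (hab : a ≠ b)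
    (ha : Q.eval a = 0) (hb : Q.eval b = 0) (ha₂ : Q.derivative.derivative.eval a = 0)
    (hb₂ : Q.derivative.derivative.eval b = 0) : Q = 0 := by
  obtain ⟨⟨c₃, c₂, c₁, c₀⟩, rfl⟩ := Cubic.exists_toPoly_eq_of_natDegree_le hQ
  simp only [Cubic.toPoly, eval_add, eval_mul, eval_C, eval_pow, eval_X, derivative_mul,
    derivative_C, zero_mul, derivative_X_pow_succ, Nat.cast_ofNat, map_add, map_one, zero_add,
    Nat.cast_one, pow_one, derivative_X, mul_one, add_zero, derivative_one, eval_one]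
    at ha hb ha₂ hb₂
  have hba : b - a ≠ 0 := sub_ne_zero.mpr (Ne.symm hab)
  have h₃ : c₃ = 0 := by
    have : 6 * c₃ * (b - a) = 0 := by linear_combination hb₂ - ha₂
    simpa [hba] using this
  have h₂ : c₂ = 0 := by subst h₃; linear_combination ha₂ / 2
  have h₁ : c₁ = 0 := by
    subst h₃ h₂
    have : c₁ * (b - a) = 0 := by linear_combination hb - ha
    simpa [hba] using this
  have h₀ : c₀ = 0 := by subst h₃ h₂ h₁; linear_combination ha
  subst h₃ h₂ h₁ h₀
  exact Cubic.zero

theorem sq_add_mul_add_sq_nonneg {α : Type*} [CommRing α] [LinearOrder α] [IsStrictOrderedRing α]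
    (a b : α) : 0 ≤ a ^ 2 + a * b + b ^ 2 := by
  nlinarith [sq_nonneg (a + b), sq_nonneg a, sq_nonneg b]

theorem eq_zero_and_eq_zero_of_sq_add_mul_add_sq_eq_zero {α : Type*} [CommRing α] [LinearOrder α]
    [IsStrictOrderedRing α] {a b : α} (h : a ^ 2 + a * b + b ^ 2 = 0) : a = 0 ∧ b = 0 :=
  ⟨by nlinarith [sq_nonneg (a + b), sq_nonneg a, sq_nonneg b],
    by nlinarith [sq_nonneg (a + b), sq_nonneg a, sq_nonneg b]⟩

theorem exists_lt_mem_Icc_add_one {l : ℕ} (hl : 0 < l) {x : ℝ} (hx : x ∈ Icc (0 : ℝ) l) :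
    ∃ i < l, x ∈ Icc (i : ℝ) (i + 1) := by
  obtain ⟨hx₀, hxl⟩ := hx
  rcases lt_or_eq_of_le hxl with hlt | rfl
  · refine ⟨⌊x⌋₊, ?_, Nat.floor_le hx₀, (Nat.lt_floor_add_one x).le⟩
    exact_mod_cast (Nat.floor_lt hx₀).mpr hlt
  · refine ⟨l - 1, by omega, ?_, ?_⟩ <;> simp [Nat.cast_sub hl]

theorem IsCubicSpline.iteratedDerivWithin_eq_eval {l i : ℕ} {g : ℝ → ℝ} (hg : IsCubicSpline l g)
    (hi : i < l) {P : ℝ[X]} (hP : ∀ t ∈ Icc (i : ℝ) (i + 1), g t = P.eval t) {n : ℕ} (hn : n ≤ 2)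
    {x : ℝ} (hx : x ∈ Icc (i : ℝ) (i + 1)) :
    iteratedDerivWithin n g (Icc 0 l) x = (derivative^[n] P).eval x :=
  iteratedDerivWithin_eq_eval_of_eqOn (Icc_subset_Icc (Nat.cast_nonneg i) (by exact_mod_cast hi))
    (uniqueDiffOn_Icc (by exact_mod_cast (Nat.zero_le i).trans_lt hi))
    (uniqueDiffOn_Icc (lt_add_one _)) (hg.1.of_le (by exact_mod_cast hn)) hP hx

theorem IsNatCubicSpline.eqOn_zero_of_eval_knots {l : ℕ} (hl : 0 < l) {g : ℝ → ℝ}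
    (hg : IsNatCubicSpline l g) (hknots : ∀ k ≤ l, g k = 0) : EqOn g 0 (Icc 0 l) := by
  obtain ⟨hg_cubic, hg₀, hgₗ⟩ := hg
  choose P hP_deg hP using hg_cubic.2
  set D : ℕ → ℝ → ℝ := fun n => iteratedDerivWithin n g (Icc 0 l) with hD_def
  have hD : ∀ n ≤ 2, ∀ i (hi : i < l), ∀ x ∈ Icc (i : ℝ) (i + 1),
      D n x = (derivative^[n] (P i hi)).eval x := fun _ hn i hi _ hx =>
    hg_cubic.iteratedDerivWithin_eq_eval hi (hP i hi) hn hx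
  have hleft (i : ℕ) : (i : ℝ) ∈ Icc (i : ℝ) (i + 1) := ⟨le_rfl, by linarith⟩
  have hright (i : ℕ) : (i : ℝ) + 1 ∈ Icc (i : ℝ) (i + 1) := ⟨by linarith, le_rfl⟩
  have hP_left (i : ℕ) (hi : i < l) : (P i hi).eval (i : ℝ) = 0 := by
    rw [← hP i hi _ (hleft i), hknots i hi.le]
  have hP_right (i : ℕ) (hi : i < l) : (P i hi).eval ((i : ℝ) + 1) = 0 := by
    rw [← hP i hi _ (hright i)]
    exact_mod_cast hknots (i + 1) hi
  have henergy : ∀ i (hi : i < l), D 2 (i + 1) * D 1 (i + 1) - D 2 i * D 1 i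
      = (D 2 i ^ 2 + D 2 i * D 2 (i + 1) + D 2 (i + 1) ^ 2) / 3 := by
    intro i hi
    simp only [hD 1 (by norm_num) i hi _ (hleft i), hD 1 (by norm_num) i hi _ (hright i),
      hD 2 le_rfl i hi _ (hleft i), hD 2 le_rfl i hi _ (hright i)]
    simpa using cubic_energy_eq (hP_deg i hi) (hP_left i hi) (hP_right i hi)
  have hsum : ∑ i ∈ Finset.range l, (D 2 i ^ 2 + D 2 i * D 2 (i + 1) + D 2 (i + 1) ^ 2) / 3 = 0 :=
    calc _ = ∑ i ∈ Finset.range l, (D 2 (i + 1) * D 1 (i + 1) - D 2 i * D 1 i) :=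
          Finset.sum_congr rfl fun i hi => (henergy i (Finset.mem_range.mp hi)).symm
      _ = D 2 l * D 1 l - D 2 0 * D 1 0 := by
          exact_mod_cast Finset.sum_range_sub (fun k : ℕ => D 2 k * D 1 k) l
      _ = 0 := by simp [hD_def, hg₀, hgₗ]
  rw [Finset.sum_eq_zero_iff_of_nonneg fun i _ =>
    div_nonneg (sq_add_mul_add_sq_nonneg _ _) zero_le_three] at hsum
  intro x hx
  obtain ⟨i, hi, hxi⟩ := exists_lt_mem_Icc_add_one hl hx
  obtain ⟨hm₀, hm₁⟩ := eq_zero_and_eq_zero_of_sq_add_mul_add_sq_eq_zero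
    (a := D 2 i) (b := D 2 (i + 1)) (by linarith [hsum i (Finset.mem_range.mpr hi)])
  rw [hD 2 le_rfl i hi _ (hleft i)] at hm₀
  rw [hD 2 le_rfl i hi _ (hright i)] at hm₁
  have hPi : P i hi = 0 := cubic_eq_zero_of_eval_eq_zero (hP_deg i hi) (lt_add_one (i : ℝ)).ne
    (hP_left i hi) (hP_right i hi) (by simpa using hm₀) (by simpa using hm₁)
  simp [hP i hi x hxi, hPi]

theorem IsNatCubicSpline.add {l : ℕ} (hl : 0 < l) {f g : ℝ → ℝ} (hf : IsNatCubicSpline l f)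
    (hg : IsNatCubicSpline l g) : IsNatCubicSpline l (f + g) := by
  obtain ⟨⟨hf_smooth, hf_pieces⟩, hf₀, hfₗ⟩ := hf
  obtain ⟨⟨hg_smooth, hg_pieces⟩, hg₀, hgₗ⟩ := hg
  have hI : UniqueDiffOn ℝ (Icc (0 : ℝ) l) := uniqueDiffOn_Icc (Nat.cast_pos.mpr hl)
  have hsum : ∀ x ∈ Icc (0 : ℝ) l, iteratedDerivWithin 2 (f + g) (Icc 0 l) x
      = iteratedDerivWithin 2 f (Icc 0 l) x + iteratedDerivWithin 2 g (Icc 0 l) x :=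
    fun x hx => iteratedDerivWithin_add hx hI (hf_smooth x hx) (hg_smooth x hx)
  refine ⟨⟨hf_smooth.add hg_smooth, fun i hi => ?_⟩, ?_, ?_⟩
  · obtain ⟨P, hP_deg, hP⟩ := hf_pieces i hi
    obtain ⟨Q, hQ_deg, hQ⟩ := hg_pieces i hi
    exact ⟨P + Q, natDegree_add_le_of_degree_le hP_deg hQ_deg,
      fun t ht => by simp [hP t ht, hQ t ht]⟩
  · rw [hsum 0 (left_mem_Icc.mpr (Nat.cast_nonneg l)), hf₀, hg₀, add_zero]
  · rw [hsum l (right_mem_Icc.mpr (Nat.cast_nonneg l)), hfₗ, hgₗ, add_zero]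

theorem IsNatCubicSpline.const_smul {l : ℕ} (c : ℝ) {g : ℝ → ℝ} (hg : IsNatCubicSpline l g) :
    IsNatCubicSpline l (c • g) := by
  obtain ⟨⟨hg_smooth, hg_pieces⟩, hg₀, hgₗ⟩ := hg
  refine ⟨⟨hg_smooth.const_smul c, fun i hi => ?_⟩, ?_, ?_⟩
  · obtain ⟨P, hP_deg, hP⟩ := hg_pieces i hi
    exact ⟨C c * P, natDegree_C_mul_le c P |>.trans hP_deg, fun t ht => by simp [hP t ht]⟩
  · simp [hg₀]
  · simp [hgₗ]

theorem isNatCubicSpline_zero (l : ℕ) : IsNatCubicSpline l 0 :=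
  ⟨⟨contDiffOn_const, fun _ _ => ⟨0, by simp, fun _ _ => by simp⟩⟩,
    by simp [Pi.zero_def], by simp [Pi.zero_def]⟩

def natSplineSubmodule (l : ℕ) (hl : 0 < l) : Submodule ℝ (Icc (0 : ℝ) l → ℝ) where
  carrier := natSplineSet l
  add_mem' := by
    rintro _ _ ⟨f, hf, hf_eq⟩ ⟨g, hg, hg_eq⟩
    exact ⟨f + g, hf.add hl hg, fun x => by simp [hf_eq, hg_eq]⟩
  zero_mem' := ⟨0, isNatCubicSpline_zero l, fun _ => rfl⟩
  smul_mem' := by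
    rintro c _ ⟨g, hg, hg_eq⟩
    exact ⟨c • g, hg.const_smul c, fun x => by simp [hg_eq]⟩

theorem isNatCubicSpline_of_contDiff {l : ℕ} (hl : 0 < l) {g : ℝ → ℝ} (hg : ContDiff ℝ 2 g)
    (hpieces : ∀ i < l, ∃ P : ℝ[X], P.natDegree ≤ 3 ∧
      ∀ t ∈ Icc (i : ℝ) ((i : ℝ) + 1), g t = P.eval t)
    (h₀ : iteratedDeriv 2 g 0 = 0) (hₗ : iteratedDeriv 2 g l = 0) : IsNatCubicSpline l g := by
  have hI : UniqueDiffOn ℝ (Icc (0 : ℝ) l) := uniqueDiffOn_Icc (Nat.cast_pos.mpr hl)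
  refine ⟨⟨hg.contDiffOn, hpieces⟩, ?_, ?_⟩
  · rwa [iteratedDerivWithin_eq_iteratedDeriv hI hg.contDiffAt
      (left_mem_Icc.mpr (Nat.cast_nonneg l))]
  · rwa [iteratedDerivWithin_eq_iteratedDeriv hI hg.contDiffAt
      (right_mem_Icc.mpr (Nat.cast_nonneg l))]

theorem isNatCubicSpline_eval_of_natDegree_le_one {l : ℕ} (hl : 0 < l) {P : ℝ[X]}
    (hP : P.natDegree ≤ 1) : IsNatCubicSpline l fun x => P.eval x := by
  have hP'' : derivative^[2] P = 0 := iterate_derivative_eq_zero (by omega)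
  refine isNatCubicSpline_of_contDiff hl (by simpa using P.contDiff_aeval (𝕜 := ℝ) 2)
    (fun _ _ => ⟨P, by omega, fun _ _ => rfl⟩) ?_ ?_ <;> simp [P.iteratedDeriv_eval, hP'']

noncomputable def natTruncCube (l j : ℕ) (x : ℝ) : ℝ := max (x - j) 0 ^ 3 - (l - j) / l * x ^ 3

theorem isNatCubicSpline_natTruncCube {l j : ℕ} (hl : 0 < l) (hj : j ≤ l) :
    IsNatCubicSpline l (natTruncCube l j) := by
  set c : ℝ := (l - j) / l
  have hd₁ (x : ℝ) : HasDerivAt (natTruncCube l j) (3 * max (x - j) 0 ^ 2 - c * (3 * x ^ 2)) x := by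
    have h := (hasDerivAt_max_zero_pow 1 (x - j)).comp_sub_const x j
    norm_num at h
    exact h.sub ((hasDerivAt_pow 3 x).const_mul c)
  have hd₂ (x : ℝ) : HasDerivAt (fun y : ℝ => 3 * max (y - j) 0 ^ 2 - c * (3 * y ^ 2))
      (6 * max (x - j) 0 - c * (6 * x)) x := by
    have h := (hasDerivAt_max_zero_pow 0 (x - j)).comp_sub_const x j
    norm_num at h
    exact ((h.const_mul 3).fun_sub (((hasDerivAt_pow 2 x).const_mul 3).const_mul c)).congr_deriv
      (by norm_num; ring)
  refine isNatCubicSpline_of_contDiff hl ?_ (fun i _ => ?_)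
    (iteratedDeriv_two_eq_of_hasDerivAt hd₁ (hd₂ 0) |>.trans (by simp))
    (iteratedDeriv_two_eq_of_hasDerivAt hd₁ (hd₂ l) |>.trans ?_)
  · exact ((contDiff_max_zero_pow 2).comp (contDiff_id.sub contDiff_const)).sub
      (contDiff_const.mul (contDiff_id.pow 3))
  · by_cases hji : j ≤ i
    · refine ⟨(X - C (j : ℝ)) ^ 3 - C c * X ^ 3, by compute_degree!, fun t ht => ?_⟩
      have : (j : ℝ) ≤ t := le_trans (by exact_mod_cast hji) ht.1
      simp [natTruncCube, c, max_eq_left (sub_nonneg.mpr this)]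
    · refine ⟨-(C c * X ^ 3), by compute_degree!, fun t ht => ?_⟩
      have : t ≤ j := ht.2.trans (by exact_mod_cast Nat.lt_iff_add_one_le.mp (not_le.mp hji))
      simp [natTruncCube, c, max_eq_right (sub_nonpos.mpr this)]
  · have : (j : ℝ) ≤ l := by exact_mod_cast hj
    rw [max_eq_left (sub_nonneg.mpr this)]
    simp only [c]
    field_simp
    ring

theorem eq_zero_of_forall_sum_mul_max_pow_eq_zero {m : ℕ} {b : Fin m → ℝ}
    (h : ∀ k : Fin m, ∑ j : Fin m, max ((k : ℝ) + 1 - j) 0 ^ 3 * b j = 0) : b = 0 := by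
  set M : Matrix (Fin m) (Fin m) ℝ := Matrix.of fun k j => max ((k : ℝ) + 1 - j) 0 ^ 3
  have hM : M.IsLowerTriangular := fun k j hkj => by
    have : (k : ℝ) + 1 ≤ j := by exact_mod_cast hkj
    simp [M, max_eq_right (by linarith : (k : ℝ) + 1 - j ≤ 0)]
  have hdet : M.det = 1 := by
    rw [Matrix.det_of_isLowerTriangular M hM]
    simp [M]
  exact Matrix.eq_zero_of_mulVec_eq_zero (M := M) (by simp [hdet]) (_root_.funext h)

noncomputable def natSplineBasisFun (l : ℕ) : ℕ → ℝ → ℝ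
  | 0 => fun _ => 1
  | 1 => fun x => x
  | j + 2 => natTruncCube l (j + 1)

theorem isNatCubicSpline_natSplineBasisFun {l : ℕ} (hl : 0 < l) :
    ∀ k ≤ l, IsNatCubicSpline l (natSplineBasisFun l k)
  | 0, _ => by
    simpa [natSplineBasisFun] using
      isNatCubicSpline_eval_of_natDegree_le_one hl (P := C 1) (by simp)
  | 1, _ => by
    simpa [natSplineBasisFun] using isNatCubicSpline_eval_of_natDegree_le_one hl natDegree_X_le
  | j + 2, hk => isNatCubicSpline_natTruncCube hl (by omega)

theorem sum_mul_natSplineBasisFun_apply (m : ℕ) (c : Fin (m + 2) → ℝ) (x : ℝ) :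
    ∑ k, c k * natSplineBasisFun (m + 1) k x
      = c 0 + c 1 * x - (∑ j : Fin m, c j.succ.succ * ((m - j) / (m + 1))) * x ^ 3
        + ∑ j : Fin m, max (x - (j + 1)) 0 ^ 3 * c j.succ.succ := by
  simp only [Fin.sum_univ_succ, natSplineBasisFun, Fin.coe_ofNat_eq_mod, Nat.zero_mod, mul_one,
    Fin.val_succ, Fin.succ_zero_eq_one, zero_add, natTruncCube, Nat.cast_add, Nat.cast_one,
    add_sub_add_right_eq_sub]
  have hsum : ∑ j : Fin m, c j.succ.succ * (max (x - (j + 1)) 0 ^ 3 - (m - j) / (m + 1) * x ^ 3)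
      = ∑ j : Fin m, max (x - (j + 1)) 0 ^ 3 * c j.succ.succ
        - (∑ j : Fin m, c j.succ.succ * ((m - j) / (m + 1))) * x ^ 3 := by
    rw [Finset.sum_mul, ← Finset.sum_sub_distrib]
    exact Finset.sum_congr rfl fun j _ => by ring
  rw [hsum]
  ring

theorem linearIndependent_natSplineBasisFun {l : ℕ} (hl : 0 < l) :
    LinearIndependent ℝ fun (k : Fin (l + 1)) (x : Icc (0 : ℝ) l) => natSplineBasisFun l k x := by
  obtain ⟨m, rfl⟩ : ∃ m, l = m + 1 := ⟨l - 1, by omega⟩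
  rw [Fintype.linearIndependent_iff]
  intro c hc
  set Γ : ℝ := ∑ j : Fin m, c j.succ.succ * ((m - j) / (m + 1))
  have hs : ∀ x ∈ Icc (0 : ℝ) (m + 1), c 0 + c 1 * x - Γ * x ^ 3
      + ∑ j : Fin m, max (x - (j + 1)) 0 ^ 3 * c j.succ.succ = 0 := fun x hx => by
    rw [← sum_mul_natSplineBasisFun_apply]
    simpa using congrFun hc ⟨x, by exact_mod_cast hx⟩
  -- On `[0, 1]` the truncated powers vanish, leaving the cubic `c 0 + c 1 * x - Γ * x ^ 3`.
  have hlow : ∀ x : ℝ, x ≤ 1 → ∑ j : Fin m, max (x - ((j : ℕ) + 1)) 0 ^ 3 * c j.succ.succ = 0 :=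
    fun x hx => Finset.sum_eq_zero fun j _ => by
      rw [max_eq_right (by linarith [Nat.cast_nonneg (α := ℝ) (j : ℕ)]), zero_pow three_ne_zero,
        zero_mul]
  have h₀ := hs 0 ⟨le_rfl, by positivity⟩
  have h₁ := hs (1 / 2) ⟨by norm_num, by linarith [Nat.cast_nonneg (α := ℝ) m]⟩
  have h₂ := hs 1 ⟨zero_le_one, by linarith [Nat.cast_nonneg (α := ℝ) m]⟩
  rw [hlow _ (by norm_num)] at h₀ h₁ h₂
  have hc₀ : c 0 = 0 := by linarith
  have hc₁ : c 1 = 0 := by linarith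
  have hΓ : Γ = 0 := by linarith
  have hb : (fun j : Fin m => c j.succ.succ) = 0 := by
    refine eq_zero_of_forall_sum_mul_max_pow_eq_zero fun k => ?_
    have hk : (k : ℝ) + 2 ≤ m + 1 := by
      have := k.isLt
      norm_cast
      omega
    have := hs (k + 2) ⟨by positivity, hk⟩
    simpa [hc₀, hc₁, hΓ, show ∀ j : ℝ, (k : ℝ) + 2 - (j + 1) = k + 1 - j from fun j => by ring]
      using this
  intro k
  exact Fin.cases hc₀ (Fin.cases (by simpa using hc₁) fun j => congrFun hb j) k

def knot (l : ℕ) (i : Fin (l + 1)) : Icc (0 : ℝ) l :=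
  ⟨i, Nat.cast_nonneg _, by exact_mod_cast Nat.lt_succ_iff.mp i.isLt⟩

def knotEval (l : ℕ) : (Icc (0 : ℝ) l → ℝ) →ₗ[ℝ] Fin (l + 1) → ℝ :=
  LinearMap.funLeft ℝ ℝ (knot l)

theorem knotEval_domRestrict_injective {l : ℕ} (hl : 0 < l) :
    Function.Injective ((knotEval l).domRestrict (natSplineSubmodule l hl)) := by
  refine (injective_iff_map_eq_zero _).mpr ?_
  rintro ⟨f, g, hg, hfg⟩ hf
  have hknots : ∀ k ≤ l, g k = 0 := fun k hk => by
    simpa [knotEval, knot, hfg] using congrFun hf ⟨k, Nat.lt_succ_of_le hk⟩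
  ext x
  simpa [hfg] using hg.eqOn_zero_of_eval_knots hl hknots x.2

/-- The space `S_{3,nat}(0,…,l)` of natural cubic splines is a real vector space of
dimension `l + 1`, and evaluation at the knots `0, …, l` is a linear isomorphism onto
`ℝ^{l+1}`. -/
theorem natSplineSpace_finrank_and_eval_equiv (l : ℕ) (hl : 1 ≤ l) :
    ∃ S : Submodule ℝ (Set.Icc (0 : ℝ) (l : ℝ) → ℝ),
      (S : Set (Set.Icc (0 : ℝ) (l : ℝ) → ℝ)) = natSplineSet l ∧
        Module.finrank ℝ S = l + 1 ∧
        ∃ e : S ≃ₗ[ℝ] (Fin (l + 1) → ℝ),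
          ∀ (f : S) (i : Fin (l + 1)),
            e f i = (f : Set.Icc (0 : ℝ) (l : ℝ) → ℝ)
              ⟨(i : ℕ), Set.mem_Icc.mpr
                ⟨by positivity, by exact_mod_cast Nat.lt_succ_iff.mp i.isLt⟩⟩ := by
  set S := natSplineSubmodule l hl
  set E := (knotEval l).domRestrict S
  have hE : Function.Injective E := knotEval_domRestrict_injective hl
  have : FiniteDimensional ℝ S := Module.Finite.of_injective E hE
  have hbasis : LinearIndependent ℝ fun k : Fin (l + 1) => (⟨fun x => natSplineBasisFun l k x,
      natSplineBasisFun l k, isNatCubicSpline_natSplineBasisFun hl k k.is_le, fun _ => rfl⟩ : S) :=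
    (linearIndependent_natSplineBasisFun hl).of_comp S.subtype
  have hrank : Module.finrank ℝ S = l + 1 := le_antisymm
    (by simpa using LinearMap.finrank_le_finrank_of_injective hE)
    (by simpa using hbasis.fintype_card_le_finrank)
  have hsurj : Function.Surjective E :=
    (LinearMap.injective_iff_surjective_of_finrank_eq_finrank (by simp [hrank])).mp hE
  exact ⟨S, rfl, hrank, LinearEquiv.ofBijective E ⟨hE, hsurj⟩, fun _ _ => rfl⟩
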